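/- Upper bound direction: for any bipartite density operator ρ_AB there exists a state σ ∈ IQ with ρ_AB ≤ (1 + C^{A|B}_{l1}(ρ_AB)) σ; explicitly, σ ∝ Σ_i |i⟩⟨i|_A ⊗ ρ^B_{ii} + Σ_{i<j} (|i⟩⟨i|_A ⊗ |ρ^B_{ji}| + |j⟩⟨j|_A ⊗ |ρ^B_{ij}|) works, using that for i ≠ j, |i⟩⟨i| ⊗ |ρ^B_{ji}| + |j⟩⟨j| ⊗ |ρ^B_{ij}| − |i⟩⟨j| ⊗ ρ^B_{ij} − |j⟩⟨i| ⊗ ρ^B_{ji} ≥ 0. -/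

import Mathlib

open scoped BigOperators ComplexOrder Kronecker

/-- Trace norm: `‖P‖_tr = Tr √(Pᴴ P)`. -/
noncomputable def traceNorm {n : Type*} [Fintype n] [DecidableEq n] (P : Matrix n n ℂ) : ℝ :=
  (((Matrix.posSemidef_conjTranspose_mul_self P).1.eigenvectorUnitary.1 *
      Matrix.diagonal (((↑) : ℝ → ℂ) ∘ ((Matrix.posSemidef_conjTranspose_mul_self P).1.eigenvalues · |>.sqrt)) *
      (star (Matrix.posSemidef_conjTranspose_mul_self P).1.eigenvectorUnitary : Matrix n n ℂ)).trace).re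

/-- The B-blocks of an operator on H_A ⊗ H_B. -/
def blockB {A B : Type*} (Q : Matrix (A × B) (A × B) ℂ) (i j : A) : Matrix B B ℂ :=
  fun b b' => Q (i, b) (j, b')

/-- l1 norm of IQ coherence: C^{A|B}_{l1}(ρ) = Σ_{i≠j} ‖ρ^B_{ij}‖_tr. -/
noncomputable def CIQl1 {A B : Type*} [Fintype A] [Fintype B] [DecidableEq A] [DecidableEq B]
    (ρ : Matrix (A × B) (A × B) ℂ) : ℝ :=
  ∑ i, ∑ j, if i = j then 0 else traceNorm (blockB ρ i j)

/-- The set of incoherent-quantum (IQ) states: convex combinations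
Σ_k p_k σ^A_k ⊗ τ^B_k with each σ^A_k an incoherent (diagonal) state on A and
each τ^B_k a state on B. -/
def IQstates (A B : Type*) [Fintype A] [Fintype B] [DecidableEq A] [DecidableEq B] :
    Set (Matrix (A × B) (A × B) ℂ) :=
  { σ | ∃ (k : ℕ) (w : Fin k → ℝ) (sA : Fin k → Matrix A A ℂ) (tB : Fin k → Matrix B B ℂ),
      (∀ m, 0 ≤ w m) ∧ (∑ m, w m = 1) ∧
      (∀ m, (sA m).PosSemidef ∧ (sA m).trace = 1 ∧ ∀ i j, i ≠ j → sA m i j = 0) ∧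
      (∀ m, (tB m).PosSemidef ∧ (tB m).trace = 1) ∧
      σ = ∑ m, (w m : ℂ) • (sA m ⊗ₖ tB m) }

/-- Max-relative entropy of IQ coherence:
C^{A|B}_max(ρ) = log₂ min {λ : ρ ≤ λσ for some σ ∈ IQ}. -/
noncomputable def CmaxIQ {A B : Type*} [Fintype A] [Fintype B] [DecidableEq A] [DecidableEq B]
    (ρ : Matrix (A × B) (A × B) ℂ) : ℝ :=
  Real.logb 2 (sInf {l : ℝ | ∃ σ ∈ IQstates A B, ((l : ℂ) • σ - ρ).PosSemidef})

/-!
Write `ρ = ∑ i j, |i⟩⟨j| ⊗ ρ_ij`. For `i ≠ j` the Hermitian operator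
`H = |i⟩⟨j| ⊗ ρ_ij + |j⟩⟨i| ⊗ ρ_ji` squares to `|i⟩⟨i| ⊗ ρ_ij ρ_ji + |j⟩⟨j| ⊗ ρ_ji ρ_ij`, so
`|H| = |i⟩⟨i| ⊗ |ρ_ji| + |j⟩⟨j| ⊗ |ρ_ij|` and `H ≤ |H|`. Summing over ordered pairs bounds `ρ`
by the block-diagonal `M = ∑ i, |i⟩⟨i| ⊗ ∑ j, |ρ_ji|`, whose trace is `Tr ρ + C_l1(ρ)`.
Normalising each block of `M` to a state writes `M = (1 + C_l1(ρ)) σ` with `σ ∈ IQ`.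
-/

open scoped MatrixOrder Matrix.Norms.L2Operator
open Matrix

lemma IsSelfAdjoint.le_cfcAbs {𝔄 : Type*} [NonUnitalCStarAlgebra 𝔄] [PartialOrder 𝔄]
    [StarOrderedRing 𝔄] {a : 𝔄} (ha : IsSelfAdjoint a) : a ≤ CFC.abs a := by
  rw [← sub_nonneg, CFC.abs_sub_self a ha]
  exact nsmul_nonneg (CFC.negPart_nonneg a) 2

section Trace

variable {n : Type*} [Fintype n]

lemma Matrix.PosSemidef.re_trace_nonneg {X : Matrix n n ℂ} (hX : X.PosSemidef) :
    0 ≤ X.trace.re :=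
  (RCLike.nonneg_iff.mp hX.trace_nonneg).1

lemma Matrix.PosSemidef.ofReal_re_trace {X : Matrix n n ℂ} (hX : X.PosSemidef) :
    (X.trace.re : ℂ) = X.trace :=
  Complex.ext rfl (RCLike.nonneg_iff.mp hX.trace_nonneg).2.symm

variable [DecidableEq n]

lemma traceNorm_eq_re_trace_cfcAbs (P : Matrix n n ℂ) :
    traceNorm P = (CFC.abs P).trace.re := by
  have h := posSemidef_conjTranspose_mul_self P
  rw [CFC.abs, star_eq_conjTranspose, CFC.sqrt_eq_real_sqrt _ h.nonneg, cfcₙ_eq_cfc, h.1.cfc_eq,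
    IsHermitian.cfc, Unitary.conjStarAlgAut_apply]
  rfl

lemma ofReal_traceNorm (P : Matrix n n ℂ) : (traceNorm P : ℂ) = (CFC.abs P).trace := by
  rw [traceNorm_eq_re_trace_cfcAbs]
  exact (CFC.abs_nonneg P).posSemidef.ofReal_re_trace

lemma ofReal_traceNorm_of_posSemidef {P : Matrix n n ℂ} (hP : P.PosSemidef) :
    (traceNorm P : ℂ) = P.trace := by
  rw [ofReal_traceNorm, CFC.abs_of_nonneg P hP.nonneg]

lemma traceNorm_nonneg (P : Matrix n n ℂ) : 0 ≤ traceNorm P :=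
  traceNorm_eq_re_trace_cfcAbs P ▸ (CFC.abs_nonneg P).posSemidef.re_trace_nonneg

end Trace

section Kronecker

variable {α A B : Type*} [CommSemiring α]

lemma Matrix.kronecker_sum {ι : Type*} (s : Finset ι) (X : Matrix A A α)
    (Y : ι → Matrix B B α) : X ⊗ₖ ∑ k ∈ s, Y k = ∑ k ∈ s, X ⊗ₖ Y k := by
  ext ⟨a, b⟩ ⟨a', b'⟩
  simp [Matrix.sum_apply, kroneckerMap_apply, Finset.mul_sum]

variable [DecidableEq A]

lemma single_kronecker_conjTranspose [StarRing α] (i j : A) (X : Matrix B B α) :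
    (single i j 1 ⊗ₖ X)ᴴ = single j i 1 ⊗ₖ Xᴴ := by
  rw [conjTranspose_kronecker, conjTranspose_single, star_one]

variable [Fintype A] [Fintype B]

lemma single_kronecker_mul_single_kronecker_same (i j k : A) (X Y : Matrix B B α) :
    (single i j 1 ⊗ₖ X) * (single j k 1 ⊗ₖ Y) = single i k 1 ⊗ₖ (X * Y) := by
  rw [← mul_kronecker_mul, single_mul_single_same, mul_one]

lemma single_kronecker_mul_single_kronecker_of_ne {j k : A} (h : j ≠ k) (i l : A)
    (X Y : Matrix B B α) : (single i j 1 ⊗ₖ X) * (single k l 1 ⊗ₖ Y) = 0 := by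
  rw [← mul_kronecker_mul, single_mul_single_of_ne (h := h), zero_kronecker]

end Kronecker

section Blocks

variable {A B : Type*}

lemma Matrix.IsHermitian.conjTranspose_blockB {ρ : Matrix (A × B) (A × B) ℂ}
    (hρ : ρ.IsHermitian) (i j : A) : (blockB ρ i j)ᴴ = blockB ρ j i := by
  ext b b'
  exact congrFun (congrFun hρ (j, b)) (i, b')

lemma Matrix.PosSemidef.blockB_self [Fintype A] [Fintype B] {ρ : Matrix (A × B) (A × B) ℂ}
    (hρ : ρ.PosSemidef) (i : A) : (blockB ρ i i).PosSemidef :=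
  hρ.submatrix (Prod.mk i)

variable [Fintype A] [DecidableEq A]

lemma sum_single_kronecker_blockB (ρ : Matrix (A × B) (A × B) ℂ) :
    ∑ i, ∑ j, single i j 1 ⊗ₖ blockB ρ i j = ρ := by
  ext ⟨a, b⟩ ⟨a', b'⟩
  simp [Matrix.sum_apply, kroneckerMap_apply, single_apply, blockB, ite_and]

lemma posSemidef_single_self_one (i : A) : (single i i (1 : ℂ)).PosSemidef := by
  simpa using posSemidef_conjTranspose_mul_self (single i i (1 : ℂ))

variable [Fintype B]

lemma single_kronecker_nonneg (i : A) {X : Matrix B B ℂ} (hX : 0 ≤ X) :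
    0 ≤ single i i (1 : ℂ) ⊗ₖ X :=
  ((posSemidef_single_self_one i).kronecker hX.posSemidef).nonneg

variable [DecidableEq B]

lemma abs_single_kronecker_add_single_kronecker {i j : A} (hij : i ≠ j) (X : Matrix B B ℂ) :
    CFC.abs (single i j 1 ⊗ₖ X + single j i 1 ⊗ₖ Xᴴ) =
      single i i 1 ⊗ₖ CFC.abs Xᴴ + single j j 1 ⊗ₖ CFC.abs X := by
  set H := single i j 1 ⊗ₖ X + single j i 1 ⊗ₖ Xᴴ
  set N := single i i 1 ⊗ₖ CFC.abs Xᴴ + single j j 1 ⊗ₖ CFC.abs X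
  have hN : 0 ≤ N := add_nonneg (single_kronecker_nonneg i (CFC.abs_nonneg _))
    (single_kronecker_nonneg j (CFC.abs_nonneg _))
  have hHH : star H * H = N * N := by
    simp only [H, N, star_eq_conjTranspose, conjTranspose_add, single_kronecker_conjTranspose,
      conjTranspose_conjTranspose, add_mul, mul_add, single_kronecker_mul_single_kronecker_same,
      single_kronecker_mul_single_kronecker_of_ne hij,
      single_kronecker_mul_single_kronecker_of_ne hij.symm, CFC.abs_mul_abs]
    abel
  rw [CFC.abs, hHH, CFC.sqrt_mul_self N hN]

lemma single_kronecker_add_single_kronecker_le {i j : A} (hij : i ≠ j) (X : Matrix B B ℂ) :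
    single i j 1 ⊗ₖ X + single j i 1 ⊗ₖ Xᴴ ≤
      single i i 1 ⊗ₖ CFC.abs Xᴴ + single j j 1 ⊗ₖ CFC.abs X := by
  rw [← abs_single_kronecker_add_single_kronecker hij]
  refine IsSelfAdjoint.le_cfcAbs ?_
  rw [IsSelfAdjoint, star_eq_conjTranspose, conjTranspose_add, single_kronecker_conjTranspose,
    single_kronecker_conjTranspose, conjTranspose_conjTranspose, add_comm]

end Blocks

section Majorant

variable {A B : Type*} [Fintype A] [DecidableEq A] [Fintype B] [DecidableEq B]

lemma CIQl1_nonneg (ρ : Matrix (A × B) (A × B) ℂ) : 0 ≤ CIQl1 ρ :=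
  Finset.sum_nonneg fun i _ => Finset.sum_nonneg fun j _ => by
    split_ifs
    exacts [le_rfl, traceNorm_nonneg _]

lemma sum_sum_traceNorm_blockB (ρ : Matrix (A × B) (A × B) ℂ) :
    ∑ i, ∑ j, traceNorm (blockB ρ i j) = ∑ i, traceNorm (blockB ρ i i) + CIQl1 ρ := by
  rw [CIQl1, ← Finset.sum_add_distrib]
  refine Finset.sum_congr rfl fun i _ => ?_
  rw [← Finset.add_sum_erase _ _ (Finset.mem_univ i), Finset.sum_ite, Finset.sum_const_zero,
    zero_add, Finset.filter_ne]

/-- The paper's `(1 + C_l1(ρ)) σ`: the term `j = i` of the inner sum is `|ρ_ii| = ρ_ii`. -/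
noncomputable def iqMajorant (ρ : Matrix (A × B) (A × B) ℂ) : Matrix (A × B) (A × B) ℂ :=
  ∑ i, single i i 1 ⊗ₖ ∑ j, CFC.abs (blockB ρ j i)

lemma le_iqMajorant {ρ : Matrix (A × B) (A × B) ℂ} (hρ : ρ.PosSemidef) : ρ ≤ iqMajorant ρ := by
  set T : A → A → Matrix (A × B) (A × B) ℂ := fun i j =>
    single i i 1 ⊗ₖ CFC.abs (blockB ρ j i) - single i j 1 ⊗ₖ blockB ρ i j
  have hT : ∀ i j, 0 ≤ T i j + T j i := by
    intro i j
    rcases eq_or_ne i j with rfl | hij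
    · simp [T, CFC.abs_of_nonneg _ (hρ.blockB_self i).nonneg]
    · have h := single_kronecker_add_single_kronecker_le hij (blockB ρ i j)
      rw [hρ.isHermitian.conjTranspose_blockB] at h
      convert sub_nonneg.mpr h using 1
      simp only [T]
      abel
  have hsum : iqMajorant ρ - ρ = ∑ i, ∑ j, T i j := by
    simp only [T, Finset.sum_sub_distrib, iqMajorant, kronecker_sum, sum_single_kronecker_blockB]
  have h2 : 0 ≤ (2 : ℝ) • (iqMajorant ρ - ρ) := by
    have hswap : ∑ i, ∑ j, T i j = ∑ i, ∑ j, T j i := Finset.sum_comm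
    calc (0 : Matrix (A × B) (A × B) ℂ) ≤ ∑ i, ∑ j, (T i j + T j i) :=
          Finset.sum_nonneg fun i _ => Finset.sum_nonneg fun j _ => hT i j
      _ = (2 : ℝ) • (iqMajorant ρ - ρ) := by
          simp only [Finset.sum_add_distrib, two_smul, hsum, ← hswap]
  rw [← sub_nonneg, ← inv_smul_smul₀ (two_ne_zero (α := ℝ)) (iqMajorant ρ - ρ)]
  exact smul_nonneg (by norm_num) h2

lemma trace_iqMajorant {ρ : Matrix (A × B) (A × B) ℂ} (hρ : ρ.PosSemidef) :
    (iqMajorant ρ).trace = ρ.trace + CIQl1 ρ := by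
  have hdiag : ρ.trace = ∑ i, (traceNorm (blockB ρ i i) : ℂ) := by
    simp only [ofReal_traceNorm_of_posSemidef (hρ.blockB_self _)]
    simp [trace, blockB, Fintype.sum_prod_type]
  calc (iqMajorant ρ).trace = ∑ i, ∑ j, (traceNorm (blockB ρ j i) : ℂ) := by
        simp [iqMajorant, trace_sum, trace_kronecker, ofReal_traceNorm]
    _ = ∑ i, ∑ j, (traceNorm (blockB ρ i j) : ℂ) := Finset.sum_comm
    _ = ρ.trace + CIQl1 ρ := by
        rw [hdiag]
        exact_mod_cast sum_sum_traceNorm_blockB ρ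

end Majorant

section IQStates

variable {A B : Type*} [Fintype A] [DecidableEq A] [Fintype B] [DecidableEq B]

lemma sum_smul_single_kronecker_mem_IQstates (p : A → ℝ) (hp0 : ∀ i, 0 ≤ p i)
    (hp1 : ∑ i, p i = 1) (τ : A → Matrix B B ℂ) (hτ : ∀ i, (τ i).PosSemidef ∧ (τ i).trace = 1) :
    ∑ i, (p i : ℂ) • (single i i 1 ⊗ₖ τ i) ∈ IQstates A B := by
  let e := (Fintype.equivFin A).symm
  refine ⟨Fintype.card A, p ∘ e, fun m => single (e m) (e m) 1, τ ∘ e, fun m => hp0 _, ?_,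
    fun m => ⟨posSemidef_single_self_one _, trace_single_eq_same _ _, fun a b hab =>
      single_apply_of_ne _ _ _ _ _ fun h => hab (h.1.symm.trans h.2)⟩, fun m => hτ _, ?_⟩
  · rwa [Function.comp_def, Equiv.sum_comp e p]
  · exact (Equiv.sum_comp e fun i => (p i : ℂ) • (single i i 1 ⊗ₖ τ i)).symm

lemma Matrix.PosSemidef.exists_eq_trace_smul [Nonempty B] {X : Matrix B B ℂ}
    (hX : X.PosSemidef) : ∃ τ : Matrix B B ℂ, (τ.PosSemidef ∧ τ.trace = 1) ∧ X = X.trace • τ := by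
  by_cases h : X.trace = 0
  · obtain ⟨b⟩ := ‹Nonempty B›
    refine ⟨single b b 1, ⟨posSemidef_single_self_one b, trace_single_eq_same _ _⟩, ?_⟩
    rw [h, zero_smul, ← hX.trace_eq_zero_iff, h]
  · obtain ⟨r, hr0, hr⟩ := RCLike.nonneg_iff_exists_ofReal.mp hX.trace_nonneg
    replace hr : (r : ℂ) = X.trace := hr
    have hr_ne : r ≠ 0 := fun h0 => h (by rw [← hr, h0, Complex.ofReal_zero])
    refine ⟨((r⁻¹ : ℝ) : ℂ) • X, ⟨hX.smul (Complex.zero_le_real.mpr (inv_nonneg.mpr hr0)), ?_⟩, ?_⟩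
    · rw [trace_smul, ← hr, smul_eq_mul, ← Complex.ofReal_mul, inv_mul_cancel₀ hr_ne,
        Complex.ofReal_one]
    · rw [← hr, smul_smul, ← Complex.ofReal_mul, mul_inv_cancel₀ hr_ne, Complex.ofReal_one,
        one_smul]

lemma exists_mem_IQstates_smul_eq (D : A → Matrix B B ℂ) (hD : ∀ i, (D i).PosSemidef) {t : ℝ}
    (ht : 0 < t) (htr : (∑ i, single i i (1 : ℂ) ⊗ₖ D i).trace = t) :
    ∃ σ ∈ IQstates A B, ∑ i, single i i (1 : ℂ) ⊗ₖ D i = (t : ℂ) • σ := by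
  have : Nonempty B := by
    by_contra hB
    rw [not_nonempty_iff] at hB
    rw [trace_eq_zero_of_isEmpty] at htr
    exact ht.ne (by exact_mod_cast htr)
  choose τ hτ hDτ using fun i => (hD i).exists_eq_trace_smul
  have htr' : ∑ i, (D i).trace.re = t := by
    simpa [trace_sum, trace_kronecker] using congrArg Complex.re htr
  refine ⟨_, sum_smul_single_kronecker_mem_IQstates (fun i => (D i).trace.re / t)
    (fun i => div_nonneg (hD i).re_trace_nonneg ht.le)
    (by rw [← Finset.sum_div, htr', div_self ht.ne']) τ hτ, ?_⟩
  rw [Finset.smul_sum]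
  refine Finset.sum_congr rfl fun i _ => ?_
  rw [smul_smul, ← Complex.ofReal_mul, mul_div_cancel₀ _ ht.ne', (hD i).ofReal_re_trace,
    ← kronecker_smul, ← hDτ i]

end IQStates

/-- upper bound direction: there exists an IQ state σ with
ρ_AB ≤ (1 + C^{A|B}_{l1}(ρ_AB)) σ. -/
theorem exists_IQ_upper_bound {A B : Type*} [Fintype A] [Fintype B] [DecidableEq A]
    [DecidableEq B] (ρ : Matrix (A × B) (A × B) ℂ) (hρ : ρ.PosSemidef) (hTr : ρ.trace = 1) :
    ∃ σ ∈ IQstates A B, ((((1 + CIQl1 ρ : ℝ) : ℂ)) • σ - ρ).PosSemidef := by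
  obtain ⟨σ, hσ, hρσ⟩ := exists_mem_IQstates_smul_eq (fun i => ∑ j, CFC.abs (blockB ρ j i))
    (fun i => posSemidef_sum _ fun j _ => (CFC.abs_nonneg _).posSemidef)
    (add_pos_of_pos_of_nonneg one_pos (CIQl1_nonneg ρ))
    (by rw [← iqMajorant, trace_iqMajorant hρ, hTr]; push_cast; ring)
  exact ⟨σ, hσ, hρσ ▸ le_iqMajorant hρ⟩
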